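/- Let F, G : R^3 → R and let UME_P^F denote the 3×D matrix with entries Σ_{p∈P} p_i w_j(F(p)). Suppose P₁, P₂ ⊆ R^3 finite with P₂ = R·P₁ for R ∈ SO(3), F invariant (F(Rp)=F(p) on P₁), and the matrix UME_{P₁}^F has rank 3 (D ≥ 3). Then R is uniquely determined: any rotation S with UME_{P₂}^F = S·UME_{P₁}^F equals R. -/

import Mathlib

/-! Invariance of `F` makes the UME matrix equivariant, `UME_{R P} = R * UME_P`, and a matrix
of full row rank can be cancelled on the right, so `S * UME_P = R * UME_P` forces `S = R`. -/

open Finset Matrix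

noncomputable instance : DecidableEq (Fin 3 → ℝ) := Classical.decEq _

/-- The discrete 3×D UME matrix of a point cloud `P` and feature `F`
with respect to functions `w j`. -/
noncomputable def discreteUME {D : ℕ} (P : Finset (Fin 3 → ℝ))
    (F : (Fin 3 → ℝ) → ℝ) (w : Fin D → ℝ → ℝ) : Matrix (Fin 3) (Fin D) ℝ :=
  Matrix.of fun i j => ∑ p ∈ P, p i * w j (F p)

theorem discreteUME_image_mulVec {D : ℕ} {A : Matrix (Fin 3) (Fin 3) ℝ}
    (hA : Function.Injective A.mulVec) {P : Finset (Fin 3 → ℝ)} {F : (Fin 3 → ℝ) → ℝ}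
    (hF : ∀ p ∈ P, F (A *ᵥ p) = F p) (w : Fin D → ℝ → ℝ) :
    discreteUME (P.image fun p => A *ᵥ p) F w = A * discreteUME P F w := by
  ext i j
  calc ∑ p ∈ P.image (fun p => A *ᵥ p), p i * w j (F p)
      = ∑ p ∈ P, (A *ᵥ p) i * w j (F (A *ᵥ p)) := sum_image fun _ _ _ _ h => hA h
    _ = ∑ p ∈ P, ∑ k, A i k * (p k * w j (F p)) := by
        refine sum_congr rfl fun p hp => ?_
        simp only [hF p hp, mulVec, dotProduct, sum_mul, mul_assoc]
    _ = ∑ k, A i k * ∑ p ∈ P, p k * w j (F p) := by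
        simp only [sum_comm (s := P), mul_sum]

theorem Matrix.linearIndependent_row_of_rank_eq_card {m n K : Type*} [Fintype m] [Fintype n]
    [Field K] {M : Matrix m n K} (hM : M.rank = Fintype.card m) : LinearIndependent K M.row := by
  rw [linearIndependent_iff_card_eq_finrank_span, ← hM, rank_eq_finrank_span_row, Set.finrank]

theorem Matrix.mul_right_cancel_of_rank_eq_card {l m n K : Type*} [Fintype m] [Fintype n]
    [Field K] {M : Matrix m n K} (hM : M.rank = Fintype.card m) {A B : Matrix l m K}
    (hAB : A * M = B * M) : A = B := by
  cases isEmpty_or_nonempty l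
  · exact Subsingleton.elim A B
  exact mul_left_injective_iff_vecMul_injective.2
    (vecMul_injective_iff.2 (linearIndependent_row_of_rank_eq_card hM)) hAB

theorem discreteUME_rotation_unique_general {D : ℕ}
    (R : Matrix (Fin 3) (Fin 3) ℝ)
    (hRdet : R.det = 1)
    (P₁ : Finset (Fin 3 → ℝ))
    (F : (Fin 3 → ℝ) → ℝ)
    (hF : ∀ p ∈ P₁, F (R.mulVec p) = F p)
    (w : Fin D → ℝ → ℝ)
    (hrank : (discreteUME P₁ F w).rank = 3)
    (S : Matrix (Fin 3) (Fin 3) ℝ)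
    (hSU : discreteUME (P₁.image (fun p => R.mulVec p)) F w = S * discreteUME P₁ F w) :
    S = R := by
  have hRinj : Function.Injective R.mulVec :=
    mulVec_injective_of_det_ne_zero (by rw [hRdet]; exact one_ne_zero)
  refine mul_right_cancel_of_rank_eq_card (by rw [hrank, Fintype.card_fin]) ?_
  rw [← hSU, discreteUME_image_mulVec hRinj hF]

theorem discreteUME_rotation_unique {D : ℕ} (hD : 3 ≤ D)
    (R : Matrix (Fin 3) (Fin 3) ℝ)
    (hR : R ∈ Matrix.orthogonalGroup (Fin 3) ℝ) (hRdet : R.det = 1)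
    (P₁ : Finset (Fin 3 → ℝ))
    (F : (Fin 3 → ℝ) → ℝ)
    (hF : ∀ p ∈ P₁, F (R.mulVec p) = F p)
    (w : Fin D → ℝ → ℝ)
    (hrank : (discreteUME P₁ F w).rank = 3)
    (S : Matrix (Fin 3) (Fin 3) ℝ)
    (hS : S ∈ Matrix.orthogonalGroup (Fin 3) ℝ) (hSdet : S.det = 1)
    (hSU : discreteUME (P₁.image (fun p => R.mulVec p)) F w = S * discreteUME P₁ F w) :
    S = R :=
  discreteUME_rotation_unique_general R hRdet P₁ F hF w hrank S hSU
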